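/- Let J : ℕ → (0,∞) be a nondecreasing function that is subexponentially bounded, i.e., for every α > 0 there exists C_α > 0 such that J(n) ≤ C_α · exp(α·n) for all n. Then liminf_{n→∞} J(n+4)/J(n) = 1. -/

import Mathlib

/-! If `J (n + p) / J n ≥ a > 1` for all large `n`, then `J` grows at least like `a ^ (n / p)`,
which no subexponential bound allows; monotonicity gives the ratio `≥ 1` from below. -/

open Filter

def SubexponentiallyBounded (J : ℕ → ℝ) : Prop :=
  ∀ α : ℝ, 0 < α → ∃ C : ℝ, ∀ n : ℕ, J n ≤ C * Real.exp (α * n)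

lemma pow_mul_le_of_forall_ge_mul_le {J : ℕ → ℝ} {a : ℝ} (ha : 0 ≤ a) {p N : ℕ}
    (h : ∀ n ≥ N, a * J n ≤ J (n + p)) (k : ℕ) : a ^ k * J N ≤ J (N + p * k) := by
  induction k with
  | zero => simp
  | succ k ih =>
    calc a ^ (k + 1) * J N = a * (a ^ k * J N) := by ring
      _ ≤ a * J (N + p * k) := mul_le_mul_of_nonneg_left ih ha
      _ ≤ J (N + p * k + p) := h _ (Nat.le_add_right _ _)
      _ = J (N + p * (k + 1)) := by rw [mul_add_one, add_assoc]

namespace SubexponentiallyBounded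

variable {J : ℕ → ℝ}

/-- Use the bound at rate `α = log b / p` for some `1 < b < a`: it forces `(a / b) ^ k` to stay
bounded. -/
theorem not_forall_pow_mul_le (hJ : SubexponentiallyBounded J) {a : ℝ} (ha : 1 < a)
    {p N : ℕ} (hp : 0 < p) (hJN : 0 < J N) : ¬ ∀ k : ℕ, a ^ k * J N ≤ J (N + p * k) := by
  intro hgrowth
  obtain ⟨b, hb1, hba⟩ := exists_between ha
  have hb0 : 0 < b := one_pos.trans hb1
  obtain ⟨C, hC⟩ := hJ (Real.log b / p) (by have := Real.log_pos hb1; positivity)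
  have hexp (k : ℕ) : Real.exp (Real.log b / p * ↑(N + p * k))
      = Real.exp (Real.log b / p * N) * b ^ k := by
    rw [← Real.rpow_natCast b k, Real.rpow_def_of_pos hb0, ← Real.exp_add]
    congr 1
    push_cast
    field_simp
  have hbounded (k : ℕ) : (a / b) ^ k * J N ≤ C * Real.exp (Real.log b / p * N) := by
    have hbk : 0 < b ^ k := pow_pos hb0 k
    rw [div_pow, div_mul_eq_mul_div, div_le_iff₀ hbk]
    calc a ^ k * J N ≤ J (N + p * k) := hgrowth k
      _ ≤ C * Real.exp (Real.log b / p * ↑(N + p * k)) := hC _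
      _ = C * Real.exp (Real.log b / p * N) * b ^ k := by rw [hexp, mul_assoc]
  obtain ⟨k, hk⟩ := ((tendsto_pow_atTop_atTop_of_one_lt ((one_lt_div hb0).2 hba)).atTop_mul_const
    hJN |>.eventually_gt_atTop (C * Real.exp (Real.log b / p * N))).exists
  exact (hbounded k).not_gt hk

theorem not_eventually_le_shift_div (hJ : SubexponentiallyBounded J) (hpos : ∀ n, 0 < J n)
    {a : ℝ} (ha : 1 < a) {p : ℕ} (hp : 0 < p) :
    ¬ ∀ᶠ n in atTop, a ≤ J (n + p) / J n := by
  rw [eventually_atTop]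
  rintro ⟨N, hN⟩
  refine hJ.not_forall_pow_mul_le ha hp (hpos N) (pow_mul_le_of_forall_ge_mul_le
    (one_pos.trans ha).le fun n hn => ?_)
  exact (le_div_iff₀ (hpos n)).1 (hN n hn)

theorem liminf_shift_div_eq_one (hJ : SubexponentiallyBounded J) (hpos : ∀ n, 0 < J n)
    (hmono : Monotone J) {p : ℕ} (hp : 0 < p) :
    liminf (fun n => J (n + p) / J n) atTop = 1 := by
  rw [liminf_eq]
  refine IsGreatest.csSup_eq ⟨Eventually.of_forall fun n => ?_, fun a ha => ?_⟩
  · exact (one_le_div (hpos n)).2 (hmono (Nat.le_add_right n p))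
  · exact not_lt.1 fun h => hJ.not_eventually_le_shift_div hpos h hp ha

end SubexponentiallyBounded

/-- If `J : ℕ → (0,∞)` is nondecreasing and subexponentially bounded, then
`liminf J(n+4)/J(n) = 1`. -/
theorem stmt1 (J : ℕ → ℝ) (hpos : ∀ n, 0 < J n) (hmono : Monotone J)
    (hsub : ∀ α : ℝ, 0 < α → ∃ Cα : ℝ, 0 < Cα ∧ ∀ n : ℕ, J n ≤ Cα * Real.exp (α * n)) :
    Filter.liminf (fun n => J (n + 4) / J n) Filter.atTop = 1 :=
  SubexponentiallyBounded.liminf_shift_div_eq_one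
    (fun α hα => (hsub α hα).imp fun _ hC => hC.2) hpos hmono (by norm_num)
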